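/- arXiv:1605.06093 — 5 statements merged into one kernel-verified Lean document; each statement's English description precedes it below -/
import Mathlib

section
/- Given a strictly convex quadrilateral with non-orthogonal diagonals, the target-square construction is invariant under cyclic shifts of the vertex labels: if the labels r1, r2, r3, r4 are shifted to r2, r3, r4, r1 (both orderings traversing the quadrilateral boundary in the same rotational direction) and the construction is repeated, the resulting four guidelines ℓ1, ℓ2, ℓ3, ℓ4 are the same lines (as a set, with ℓi still passing through ri), and hence the resulting target square is the same. -/
open EuclideanGeometry Real
open scoped RealInnerProductSpace

noncomputable section

abbrev Pt := EuclideanSpace ℝ (Fin 2)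

/-- Cross product of two planar vectors. -/
def cross2 (u v : Pt) : ℝ := u 0 * v 1 - u 1 * v 0

/-- Rotation of a planar vector by 90 degrees counterclockwise. -/
def rot90 (v : Pt) : Pt := WithLp.toLp 2 ![-(v 1), v 0]

/-- The line through `a` with direction vector `d`. -/
def lineDir (a d : Pt) : Set Pt := {p | cross2 (p - a) d = 0}

/-- The line through two points, as a set. -/
def lineThru (a b : Pt) : Set Pt := (affineSpan ℝ {a, b} : Set Pt)

/-- Strictly convex position in the given cyclic order. -/
def Convex4 (a b c d : Pt) : Prop :=
  (0 < cross2 (b-a) (c-b) ∧ 0 < cross2 (c-b) (d-c) ∧ 0 < cross2 (d-c) (a-d) ∧ 0 < cross2 (a-d) (b-a)) ∨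
  (cross2 (b-a) (c-b) < 0 ∧ cross2 (c-b) (d-c) < 0 ∧ cross2 (d-c) (a-d) < 0 ∧ cross2 (a-d) (b-a) < 0)

/-- `a b c d` in clockwise order: every consecutive triple has negative orientation. -/
def Clockwise4 (a b c d : Pt) : Prop :=
  cross2 (b-a) (c-b) < 0 ∧ cross2 (c-b) (d-c) < 0 ∧ cross2 (d-c) (a-d) < 0 ∧ cross2 (a-d) (b-a) < 0

/-- A (nondegenerate) square: four equal sides and four right angles. -/
def IsSquare4 (a b c d : Pt) : Prop :=
  a ≠ b ∧ dist a b = dist b c ∧ dist b c = dist c d ∧ dist c d = dist d a ∧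
  inner ℝ (b - a) (d - a) = (0:ℝ) ∧ inner ℝ (a - b) (c - b) = (0:ℝ) ∧
  inner ℝ (b - c) (d - c) = (0:ℝ) ∧ inner ℝ (c - d) (a - d) = (0:ℝ)

/-- `q` is the auxiliary point of the target-square construction for `r1 r2 r3 r4`:
`dist r1 q = dist r2 r4`, the lines `r1 q` and `r2 r4` are orthogonal, and the ray
from `r1` through `q` intersects the line `r2 r4`. -/
def IsQPoint (r1 r2 r3 r4 q : Pt) : Prop :=
  dist r1 q = dist r2 r4 ∧ inner ℝ (q - r1) (r4 - r2) = (0:ℝ) ∧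
  ∃ t : ℝ, 0 ≤ t ∧ r1 + t • (q - r1) ∈ lineDir r2 (r4 - r2)

/-- The set of midpoints of the edges of the square bounded by the four guidelines:
the vertices of the target square. -/
def targetVerts (l1 l2 l3 l4 : Set Pt) : Set Pt :=
  {m | (∃ a ∈ l1 ∩ l2, ∃ b ∈ l2 ∩ l3, m = midpoint ℝ a b) ∨
       (∃ a ∈ l2 ∩ l3, ∃ b ∈ l3 ∩ l4, m = midpoint ℝ a b) ∨
       (∃ a ∈ l3 ∩ l4, ∃ b ∈ l4 ∩ l1, m = midpoint ℝ a b) ∨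
       (∃ a ∈ l4 ∩ l1, ∃ b ∈ l1 ∩ l2, m = midpoint ℝ a b)}

/-! The ray condition forces `q - r1 = ε J (r4 - r2)`, where `J` is the quarter turn and the sign
`ε = ±1` is the orientation of the quadrilateral; for the shifted labels likewise
`q' - r2 = ε J (r1 - r3)` with the same `ε`. Since `J² = -1` and `ε² = 1`, this gives
`q' - r4 = ε J (q - r3)`: the shifted construction uses the same two perpendicular directions, so
every guideline through `ri` is unchanged, and the target square only sees its four lines
relabelled cyclically. -/

lemma Pt.ext_of_coords {x y : Pt} (h0 : x 0 = y 0) (h1 : x 1 = y 1) : x = y := by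
  ext i; fin_cases i <;> assumption

lemma rot90_smul (c : ℝ) (v : Pt) : rot90 (c • v) = c • rot90 v := by
  apply Pt.ext_of_coords <;> simp [rot90]

lemma rot90_rot90 (v : Pt) : rot90 (rot90 v) = -v := by
  apply Pt.ext_of_coords <;> simp [rot90]

lemma cross2_rot90_self (d : Pt) : cross2 (rot90 d) d = -‖d‖ ^ 2 := by
  rw [EuclideanSpace.norm_eq, Real.sq_sqrt (by positivity)]
  simp only [cross2, rot90, PiLp.toLp_apply, Matrix.cons_val_zero, Matrix.cons_val_one,
    Matrix.cons_val_fin_one, Real.norm_eq_abs, sq_abs, Fin.sum_univ_two]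
  ring

lemma lineDir_smul (a d : Pt) {c : ℝ} (hc : c ≠ 0) : lineDir a (c • d) = lineDir a d := by
  ext p
  simp only [lineDir, Set.mem_ofPred_eq, cross2, PiLp.smul_apply, smul_eq_mul]
  constructor <;> intro h
  · exact (mul_eq_zero.mp (by linear_combination h)).resolve_left hc
  · linear_combination c * h

lemma eq_rot90_or_eq_neg_rot90 {u w : Pt} (hlen : ‖u‖ = ‖w‖) (hperp : ⟪u, w⟫ = 0) :
    u = rot90 w ∨ u = -rot90 w := by
  have hl : u 0 ^ 2 + u 1 ^ 2 = w 0 ^ 2 + w 1 ^ 2 := by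
    simp only [EuclideanSpace.norm_eq, Fin.sum_univ_two, Real.norm_eq_abs, sq_abs] at hlen
    exact (Real.sqrt_inj (by positivity) (by positivity)).mp hlen
  have hp : u 0 * w 0 + u 1 * w 1 = 0 := by
    simpa [PiLp.inner_apply, Fin.sum_univ_two, mul_comm] using hperp
  -- Lagrange's identity `|u|²|w|² = ⟪u, w⟫² + cross2 u w ²` in factored form.
  have h : ((u 0 + w 1) ^ 2 + (u 1 - w 0) ^ 2) * ((u 0 - w 1) ^ 2 + (u 1 + w 0) ^ 2) = 0 := by
    linear_combination
      (u 0 ^ 2 + u 1 ^ 2 - (w 0 ^ 2 + w 1 ^ 2)) * hl + 4 * (u 0 * w 0 + u 1 * w 1) * hp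
  rcases mul_eq_zero.mp h with h | h
  · have h0 : u 0 = -w 1 := by nlinarith [sq_nonneg (u 0 + w 1), sq_nonneg (u 1 - w 0)]
    have h1 : u 1 = w 0 := by nlinarith [sq_nonneg (u 0 + w 1), sq_nonneg (u 1 - w 0)]
    exact Or.inl (Pt.ext_of_coords (by simp [rot90, h0]) (by simp [rot90, h1]))
  · have h0 : u 0 = w 1 := by nlinarith [sq_nonneg (u 0 - w 1), sq_nonneg (u 1 + w 0)]
    have h1 : u 1 = -w 0 := by nlinarith [sq_nonneg (u 0 - w 1), sq_nonneg (u 1 + w 0)]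
    exact Or.inr (Pt.ext_of_coords (by simp [rot90, h0]) (by simp [rot90, h1]))

lemma IsQPoint.sub_eq_sign_smul_rot90 {r1 r2 r3 r4 q : Pt} (hq : IsQPoint r1 r2 r3 r4 q)
    (hside : cross2 (r1 - r2) (r4 - r2) ≠ 0) :
    q - r1 = Real.sign (cross2 (r1 - r2) (r4 - r2)) • rot90 (r4 - r2) := by
  obtain ⟨hlen, hperp, t, ht, hray⟩ := hq
  rw [dist_comm r1, dist_comm r2, dist_eq_norm, dist_eq_norm] at hlen
  -- The ray from `r1` meets the line `r2 r4` only if it points towards it; this fixes the sign.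
  have hcross (s : ℝ) (hs : q - r1 = s • rot90 (r4 - r2)) :
      cross2 (r1 - r2) (r4 - r2) = t * s * ‖r4 - r2‖ ^ 2 := by
    have h : cross2 (r1 + t • (q - r1) - r2) (r4 - r2) = 0 := hray
    have hrot := cross2_rot90_self (r4 - r2)
    rw [hs] at h
    simp only [cross2, PiLp.sub_apply, PiLp.add_apply, PiLp.smul_apply, smul_eq_mul] at h hrot ⊢
    linear_combination h - t * s * hrot
  have hnorm : 0 ≤ t * ‖r4 - r2‖ ^ 2 := by positivity
  rcases eq_rot90_or_eq_neg_rot90 hlen hperp with hs | hs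
  · have hc := hcross 1 (by rw [hs, one_smul])
    rw [Real.sign_of_pos (lt_of_le_of_ne (by nlinarith) hside.symm), one_smul, hs]
  · have hc := hcross (-1) (by rw [hs, neg_one_smul])
    rw [Real.sign_of_neg (lt_of_le_of_ne (by nlinarith) hside), neg_one_smul, hs]

lemma cross2_sub_sub_rotate (x y z : Pt) :
    cross2 (x - y) (z - y) = -cross2 (x - z) (y - x) := by
  simp only [cross2, PiLp.sub_apply]; ring

lemma Convex4.rotate {a b c d : Pt} (h : Convex4 a b c d) : Convex4 b c d a := by
  unfold Convex4 at *
  tauto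

lemma Convex4.cross2_ne_zero {r1 r2 r3 r4 : Pt} (hconv : Convex4 r1 r2 r3 r4) :
    cross2 (r1 - r2) (r4 - r2) ≠ 0 := by
  rw [cross2_sub_sub_rotate]
  rcases hconv with ⟨-, -, -, h4⟩ | ⟨-, -, -, h4⟩
  · exact neg_ne_zero.2 h4.ne'
  · exact neg_ne_zero.2 h4.ne

lemma Convex4.sign_cross2_eq {r1 r2 r3 r4 : Pt} (hconv : Convex4 r1 r2 r3 r4) :
    Real.sign (cross2 (r2 - r3) (r1 - r3)) = Real.sign (cross2 (r1 - r2) (r4 - r2)) := by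
  rw [cross2_sub_sub_rotate, cross2_sub_sub_rotate]
  rcases hconv with ⟨h1, -, -, h4⟩ | ⟨h1, -, -, h4⟩
  · rw [Real.sign_of_neg (by linarith), Real.sign_of_neg (by linarith)]
  · rw [Real.sign_of_pos (by linarith), Real.sign_of_pos (by linarith)]

-- With `J = rot90`: `ε J (q - r3) = ε J (r1 - r3) + ε² J² (r4 - r2) = (q' - r2) + (r2 - r4)`.
lemma sub_eq_smul_rot90_of_sub_eq {r1 r2 r3 r4 q q' : Pt} {ε : ℝ} (hε : ε * ε = 1)
    (hq : q - r1 = ε • rot90 (r4 - r2)) (hq' : q' - r2 = ε • rot90 (r1 - r3)) :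
    q' - r4 = ε • rot90 (q - r3) := by
  have hq0 := congrArg (· 0) hq
  have hq1 := congrArg (· 1) hq
  have hq'0 := congrArg (· 0) hq'
  have hq'1 := congrArg (· 1) hq'
  simp only [rot90, PiLp.sub_apply, PiLp.smul_apply, smul_eq_mul,
    Matrix.cons_val_zero, Matrix.cons_val_one] at hq0 hq1 hq'0 hq'1
  apply Pt.ext_of_coords <;>
    simp only [rot90, PiLp.sub_apply, PiLp.smul_apply, smul_eq_mul,
      Matrix.cons_val_zero, Matrix.cons_val_one]
  · linear_combination hq'0 + ε * hq1 + (r4 0 - r2 0) * hε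
  · linear_combination hq'1 - ε * hq0 + (r4 1 - r2 1) * hε

lemma targetVerts_rotate (l1 l2 l3 l4 : Set Pt) :
    targetVerts l2 l3 l4 l1 = targetVerts l1 l2 l3 l4 := by
  ext m
  simp only [targetVerts, Set.mem_ofPred_eq]
  constructor <;> rintro (h | h | h | h) <;> simp only [h, true_or, or_true]

theorem stmt1_general (r1 r2 r3 r4 q q' : Pt)
    (hconv : Convex4 r1 r2 r3 r4)
    (hq : IsQPoint r1 r2 r3 r4 q)
    (hq' : IsQPoint r2 r3 r4 r1 q') :
    lineDir r2 (q' - r4) = lineDir r2 (rot90 (q - r3)) ∧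
    lineDir r3 (rot90 (q' - r4)) = lineDir r3 (q - r3) ∧
    lineDir r4 (q' - r4) = lineDir r4 (rot90 (q - r3)) ∧
    lineDir r1 (rot90 (q' - r4)) = lineDir r1 (q - r3) ∧
    targetVerts (lineDir r2 (q' - r4)) (lineDir r3 (rot90 (q' - r4)))
        (lineDir r4 (q' - r4)) (lineDir r1 (rot90 (q' - r4))) =
      targetVerts (lineDir r1 (q - r3)) (lineDir r2 (rot90 (q - r3)))
        (lineDir r3 (q - r3)) (lineDir r4 (rot90 (q - r3))) := by
  set ε := Real.sign (cross2 (r1 - r2) (r4 - r2))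
  have hside := hconv.cross2_ne_zero
  have hε : ε = -1 ∨ ε = 1 := Real.sign_apply_eq_of_ne_zero _ hside
  have hε0 : ε ≠ 0 := by rcases hε with h | h <;> norm_num [h]
  have hεε : ε * ε = 1 := by rcases hε with h | h <;> norm_num [h]
  have hq' := hq'.sub_eq_sign_smul_rot90 hconv.rotate.cross2_ne_zero
  rw [hconv.sign_cross2_eq] at hq'
  have hdir : q' - r4 = ε • rot90 (q - r3) :=
    sub_eq_smul_rot90_of_sub_eq hεε (hq.sub_eq_sign_smul_rot90 hside) hq'
  have hrot : rot90 (q' - r4) = (-ε) • (q - r3) := by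
    rw [hdir, rot90_smul, rot90_rot90, smul_neg, neg_smul]
  have h24 (a : Pt) : lineDir a (q' - r4) = lineDir a (rot90 (q - r3)) := by
    rw [hdir, lineDir_smul a _ hε0]
  have h31 (a : Pt) : lineDir a (rot90 (q' - r4)) = lineDir a (q - r3) := by
    rw [hrot, lineDir_smul a _ (neg_ne_zero.2 hε0)]
  refine ⟨h24 r2, h31 r3, h24 r4, h31 r1, ?_⟩
  rw [h24, h31, h24, h31, targetVerts_rotate]

/-- Invariance of the target-square construction under a cyclic shift of the labels:
performing the construction with labels `r2, r3, r4, r1` yields the same guidelines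
(with the guideline through each `ri` unchanged) and the same target square. -/
theorem stmt1 (r1 r2 r3 r4 q q' : Pt)
    (hconv : Convex4 r1 r2 r3 r4)
    (hdiag : inner ℝ (r3 - r1) (r4 - r2) ≠ (0:ℝ))
    (hq : IsQPoint r1 r2 r3 r4 q) (hq3 : q ≠ r3)
    (hq' : IsQPoint r2 r3 r4 r1 q') (hq'4 : q' ≠ r4) :
    lineDir r2 (q' - r4) = lineDir r2 (rot90 (q - r3)) ∧
    lineDir r3 (rot90 (q' - r4)) = lineDir r3 (q - r3) ∧
    lineDir r4 (q' - r4) = lineDir r4 (rot90 (q - r3)) ∧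
    lineDir r1 (rot90 (q' - r4)) = lineDir r1 (q - r3) ∧
    targetVerts (lineDir r2 (q' - r4)) (lineDir r3 (rot90 (q' - r4)))
        (lineDir r4 (q' - r4)) (lineDir r1 (rot90 (q' - r4))) =
      targetVerts (lineDir r1 (q - r3)) (lineDir r2 (rot90 (q - r3)))
        (lineDir r3 (q - r3)) (lineDir r4 (rot90 (q - r3))) :=
  stmt1_general r1 r2 r3 r4 q q' hconv hq hq'
end
end

section
/- Given a strictly convex quadrilateral with non-orthogonal diagonals, the target-square construction is invariant under swapping the labels of the two vertices r2 and r4: performing the construction with labels r1, r4, r3, r2 yields the same guidelines and the same target square as with labels r1, r2, r3, r4. -/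
/-!
The point `q` is `r1` moved by `r4 - r2` turned through `±90°`, the sign being the side of the
line `r2 r4` on which `r1` lies (nonzero by convexity). Swapping `r2` and `r4` reverses both the
vector `r4 - r2` and that orientation, so it yields the same `q`, hence the same guidelines; the
target square is then the same set of midpoints, with its edges listed in the opposite order.
-/

open EuclideanGeometry Real
open scoped RealInnerProductSpace

noncomputable section

lemma cross2_rot90_left (u v : Pt) : cross2 (rot90 u) v = -⟪u, v⟫ := by
  simp only [cross2, rot90, PiLp.inner_apply, RCLike.inner_apply, conj_trivial, Fin.sum_univ_two,
    Matrix.cons_val_zero, Matrix.cons_val_one]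
  ring

lemma rot90_neg (v : Pt) : rot90 (-v) = -rot90 v := by
  ext i; fin_cases i <;> simp [rot90]

lemma cross2_add_smul_left (a u v : Pt) (t : ℝ) :
    cross2 (a + t • u) v = cross2 a v + t * cross2 u v := by
  simp only [cross2, PiLp.add_apply, PiLp.smul_apply, smul_eq_mul]
  ring

lemma cross2_smul_left (a : ℝ) (u v : Pt) : cross2 (a • u) v = a * cross2 u v := by
  simp only [cross2, PiLp.smul_apply, smul_eq_mul]
  ring

lemma eq_rot90_or_eq_neg_rot90_s2 {u d : Pt} (horth : ⟪u, d⟫ = 0) (hnorm : ‖u‖ = ‖d‖) :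
    u = rot90 d ∨ u = -rot90 d := by
  have hsq : ⟪u, u⟫ = ⟪d, d⟫ := by rw [real_inner_self_eq_norm_sq, real_inner_self_eq_norm_sq, hnorm]
  simp only [PiLp.inner_apply, RCLike.inner_apply, conj_trivial, Fin.sum_univ_two] at horth hsq
  have key : ((u 0 + d 1) ^ 2 + (u 1 - d 0) ^ 2) * ((u 0 - d 1) ^ 2 + (u 1 + d 0) ^ 2) = 0 := by
    linear_combination (u 0 ^ 2 + u 1 ^ 2 - d 0 ^ 2 - d 1 ^ 2) * hsq
      + (4 * u 0 * d 0 + 4 * u 1 * d 1) * horth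
  rcases mul_eq_zero.mp key with h | h
  · left
    have h0 : u 0 = -d 1 := by nlinarith [sq_nonneg (u 0 + d 1), sq_nonneg (u 1 - d 0)]
    have h1 : u 1 = d 0 := by nlinarith [sq_nonneg (u 0 + d 1), sq_nonneg (u 1 - d 0)]
    ext i; fin_cases i <;> simp [rot90, h0, h1]
  · right
    have h0 : u 0 = d 1 := by nlinarith [sq_nonneg (u 0 - d 1), sq_nonneg (u 1 + d 0)]
    have h1 : u 1 = -d 0 := by nlinarith [sq_nonneg (u 0 - d 1), sq_nonneg (u 1 + d 0)]
    ext i; fin_cases i <;> simp [rot90, h0, h1]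

/-- The ray condition fixes the sign: `q - r1` has to point towards the line `r2 r4`. -/
lemma IsQPoint.eq {r1 r2 r3 r4 q : Pt} (hq : IsQPoint r1 r2 r3 r4 q)
    (hc : cross2 (r1 - r2) (r4 - r2) ≠ 0) :
    q = r1 + (SignType.sign (cross2 (r1 - r2) (r4 - r2)) : ℝ) • rot90 (r4 - r2) := by
  obtain ⟨hdist, horth, t, ht, hray⟩ := hq
  have hnorm : ‖q - r1‖ = ‖r4 - r2‖ := by rwa [← dist_eq_norm, ← dist_eq_norm', dist_comm]
  have hray' : cross2 (r1 - r2) (r4 - r2) + t * cross2 (q - r1) (r4 - r2) = 0 := by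
    rw [← cross2_add_smul_left, ← add_sub_right_comm]
    exact hray
  have hdd : 0 ≤ ⟪r4 - r2, r4 - r2⟫ := real_inner_self_nonneg
  rw [← add_sub_cancel r1 q]
  rcases eq_rot90_or_eq_neg_rot90_s2 horth hnorm with hrot | hrot <;>
    rw [hrot] at hray' ⊢
  · rw [cross2_rot90_left] at hray'
    have hpos : 0 < cross2 (r1 - r2) (r4 - r2) :=
      lt_of_le_of_ne (by nlinarith [mul_nonneg ht hdd]) hc.symm
    simp [sign_pos hpos]
  · rw [← neg_one_smul ℝ (rot90 _), cross2_smul_left, cross2_rot90_left] at hray'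
    have hneg : cross2 (r1 - r2) (r4 - r2) < 0 :=
      lt_of_le_of_ne (by nlinarith [mul_nonneg ht hdd]) hc
    simp [sign_neg hneg]

lemma targetVerts_swap_subset (l1 l2 l3 l4 : Set Pt) :
    targetVerts l1 l4 l3 l2 ⊆ targetVerts l1 l2 l3 l4 := by
  rintro m (⟨a, ⟨h1, h2⟩, b, ⟨h3, h4⟩, rfl⟩ | ⟨a, ⟨h1, h2⟩, b, ⟨h3, h4⟩, rfl⟩ |
    ⟨a, ⟨h1, h2⟩, b, ⟨h3, h4⟩, rfl⟩ | ⟨a, ⟨h1, h2⟩, b, ⟨h3, h4⟩, rfl⟩)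
  · exact Or.inr (Or.inr (Or.inl ⟨b, ⟨h4, h3⟩, a, ⟨h2, h1⟩, midpoint_comm a b⟩))
  · exact Or.inr (Or.inl ⟨b, ⟨h4, h3⟩, a, ⟨h2, h1⟩, midpoint_comm a b⟩)
  · exact Or.inl ⟨b, ⟨h4, h3⟩, a, ⟨h2, h1⟩, midpoint_comm a b⟩
  · exact Or.inr (Or.inr (Or.inr ⟨b, ⟨h4, h3⟩, a, ⟨h2, h1⟩, midpoint_comm a b⟩))

lemma targetVerts_swap (l1 l2 l3 l4 : Set Pt) :
    targetVerts l1 l4 l3 l2 = targetVerts l1 l2 l3 l4 :=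
  (targetVerts_swap_subset l1 l2 l3 l4).antisymm (targetVerts_swap_subset l1 l4 l3 l2)

theorem stmt2_general (r1 r2 r3 r4 q q' : Pt)
    (hconv : Convex4 r1 r2 r3 r4)
    (hq : IsQPoint r1 r2 r3 r4 q)
    (hq' : IsQPoint r1 r4 r3 r2 q') :
    lineDir r1 (q' - r3) = lineDir r1 (q - r3) ∧
    lineDir r4 (rot90 (q' - r3)) = lineDir r4 (rot90 (q - r3)) ∧
    lineDir r3 (q' - r3) = lineDir r3 (q - r3) ∧
    lineDir r2 (rot90 (q' - r3)) = lineDir r2 (rot90 (q - r3)) ∧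
    targetVerts (lineDir r1 (q' - r3)) (lineDir r4 (rot90 (q' - r3)))
        (lineDir r3 (q' - r3)) (lineDir r2 (rot90 (q' - r3))) =
      targetVerts (lineDir r1 (q - r3)) (lineDir r2 (rot90 (q - r3)))
        (lineDir r3 (q - r3)) (lineDir r4 (rot90 (q - r3))) := by
  have hc := hconv.cross2_ne_zero
  have hswap : cross2 (r1 - r4) (r2 - r4) = -cross2 (r1 - r2) (r4 - r2) := by
    simp only [cross2, PiLp.sub_apply]
    ring
  have hqq : q' = q := by
    rw [hq'.eq (by rwa [hswap, neg_ne_zero]), hq.eq hc, hswap, ← neg_sub r4, rot90_neg, Left.sign_neg]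
    simp
  subst hqq
  exact ⟨rfl, rfl, rfl, rfl, targetVerts_swap _ _ _ _⟩

/-- Invariance of the target-square construction under swapping the labels of `r2` and `r4`:
performing the construction with labels `r1, r4, r3, r2` yields the same guidelines and the
same target square as with labels `r1, r2, r3, r4`. -/
theorem stmt2 (r1 r2 r3 r4 q q' : Pt)
    (hconv : Convex4 r1 r2 r3 r4)
    (hdiag : inner ℝ (r3 - r1) (r4 - r2) ≠ (0:ℝ))
    (hq : IsQPoint r1 r2 r3 r4 q) (hq3 : q ≠ r3)
    (hq' : IsQPoint r1 r4 r3 r2 q') (hq'3 : q' ≠ r3) :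
    lineDir r1 (q' - r3) = lineDir r1 (q - r3) ∧
    lineDir r4 (rot90 (q' - r3)) = lineDir r4 (rot90 (q - r3)) ∧
    lineDir r3 (q' - r3) = lineDir r3 (q - r3) ∧
    lineDir r2 (rot90 (q' - r3)) = lineDir r2 (rot90 (q - r3)) ∧
    targetVerts (lineDir r1 (q' - r3)) (lineDir r4 (rot90 (q' - r3)))
        (lineDir r3 (q' - r3)) (lineDir r2 (rot90 (q' - r3))) =
      targetVerts (lineDir r1 (q - r3)) (lineDir r2 (rot90 (q - r3)))
        (lineDir r3 (q - r3)) (lineDir r4 (rot90 (q - r3))) :=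
  stmt2_general r1 r2 r3 r4 q q' hconv hq hq'

end
end

section
/- Let r1, r2, r3, r4 be the vertices of a strictly convex quadrilateral listed in clockwise order, with non-orthogonal diagonals, and let p1, p2, p3, p4 be their targets under the target-square construction. If p1, p2, p3 are in clockwise order, then r1, r2, r3 are in clockwise order. -/
open EuclideanGeometry Real
open scoped RealInnerProductSpace

noncomputable section

/-!
Measured along `d = q - r3` and `rot90 d`, the four guidelines bound a rectangle, so the targets
`p1, p2, p3` are the midpoints of three of its consecutive edges, and
`2 ⟪d, d⟫ · cross2 (p2 - p1) (p3 - p1) = ⟪d, r2 - r4⟫ · cross2 d (r3 - r1)`.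
The condition `(q - r1) ⊥ (r4 - r2)` turns the first factor into `⟪r3 - r1, r4 - r2⟫ ≠ 0` and
makes the second one a positive multiple of it exactly when the ray from `r1` through `q` has to
cross the line `r2 r4`, i.e. when `r1 r2 r4` is counterclockwise. So a counterclockwise
quadrilateral has counterclockwise targets, and only the clockwise case remains.
-/

lemma inner_eq_coord (u v : Pt) : ⟪u, v⟫ = u 0 * v 0 + u 1 * v 1 := by
  simp only [PiLp.inner_apply, Fin.sum_univ_two, RCLike.inner_apply, conj_trivial]
  ring

lemma cross2_sub_right (d u v : Pt) : cross2 d (u - v) = cross2 d u - cross2 d v := by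
  simp only [cross2, PiLp.sub_apply]
  ring

lemma cross2_midpoint_right (d u v : Pt) :
    cross2 d (midpoint ℝ u v) = (cross2 d u + cross2 d v) / 2 := by
  simp only [cross2, midpoint_eq_smul_add, PiLp.smul_apply, PiLp.add_apply, smul_eq_mul,
    invOf_eq_inv]
  ring

lemma inner_midpoint_right (d u v : Pt) : ⟪d, midpoint ℝ u v⟫ = (⟪d, u⟫ + ⟪d, v⟫) / 2 := by
  rw [midpoint_eq_smul_add, inner_smul_right, inner_add_right]
  norm_num
  ring

lemma cross2_comm (u v : Pt) : cross2 u v = -cross2 v u := by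
  simp only [cross2]
  ring

lemma inner_self_mul_cross2 (e x y : Pt) :
    ⟪e, e⟫ * cross2 x y = ⟪e, x⟫ * cross2 e y - cross2 e x * ⟪e, y⟫ := by
  simp only [inner_eq_coord, cross2]
  ring

lemma mem_lineDir_iff_cross2_eq {p a d : Pt} : p ∈ lineDir a d ↔ cross2 d p = cross2 d a := by
  simp only [lineDir, Set.mem_ofPred_eq, cross2, PiLp.sub_apply]
  constructor <;> intro h <;> linear_combination -h

lemma mem_lineDir_rot90_iff_inner_eq {p b d : Pt} :
    p ∈ lineDir b (rot90 d) ↔ ⟪d, p⟫ = ⟪d, b⟫ := by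
  simp only [lineDir, Set.mem_ofPred_eq, cross2, rot90, inner_eq_coord, PiLp.sub_apply,
    PiLp.toLp_apply, Matrix.cons_val_zero, Matrix.cons_val_one]
  constructor <;> intro h <;> linear_combination h

lemma two_mul_inner_self_mul_cross2_midpoints {d r1 r2 r3 r4 a12 a23 a34 a41 : Pt}
    (ha12 : a12 ∈ lineDir r1 d ∩ lineDir r2 (rot90 d))
    (ha23 : a23 ∈ lineDir r2 (rot90 d) ∩ lineDir r3 d)
    (ha34 : a34 ∈ lineDir r3 d ∩ lineDir r4 (rot90 d))
    (ha41 : a41 ∈ lineDir r4 (rot90 d) ∩ lineDir r1 d) :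
    2 * ⟪d, d⟫ * cross2 (midpoint ℝ a12 a23 - midpoint ℝ a41 a12)
        (midpoint ℝ a23 a34 - midpoint ℝ a41 a12) =
      ⟪d, r2 - r4⟫ * cross2 d (r3 - r1) := by
  -- the `rot90` lines first, as `mem_lineDir_iff_cross2_eq` matches them too
  simp only [Set.mem_inter_iff, mem_lineDir_rot90_iff_inner_eq] at ha12 ha23 ha34 ha41
  simp only [mem_lineDir_iff_cross2_eq] at ha12 ha23 ha34 ha41
  rw [mul_assoc, inner_self_mul_cross2]
  simp only [cross2_sub_right, inner_sub_right, cross2_midpoint_right, inner_midpoint_right,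
    ha12.1, ha12.2, ha23.1, ha23.2, ha34.1, ha34.2, ha41.1, ha41.2]
  ring

lemma cross2_pos_of_ray_mem_lineDir {a b w e : Pt} {t : ℝ} (ht : 0 ≤ t)
    (hmem : a + t • w ∈ lineDir b e) (hside : 0 < cross2 (b - a) e) : 0 < cross2 w e := by
  have hhit : t * cross2 w e = cross2 (b - a) e := by
    simp only [lineDir, Set.mem_ofPred_eq, cross2, PiLp.sub_apply, PiLp.add_apply,
      PiLp.smul_apply, smul_eq_mul] at hmem ⊢
    linear_combination hmem
  exact pos_of_mul_pos_right (hhit ▸ hside) ht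

lemma inner_mul_cross2_pos_of_isQPoint {r1 r2 r3 r4 q : Pt} (hq : IsQPoint r1 r2 r3 r4 q)
    (hdiag : ⟪r3 - r1, r4 - r2⟫ ≠ 0) (hside : 0 < cross2 (r2 - r1) (r4 - r1)) :
    0 < ⟪q - r3, r2 - r4⟫ * cross2 (q - r3) (r3 - r1) := by
  obtain ⟨-, hperp, t, ht, hray⟩ := hq
  have hcross : 0 < cross2 (q - r1) (r4 - r2) := by
    refine cross2_pos_of_ray_mem_lineDir ht hray ?_
    simp only [cross2, PiLp.sub_apply] at hside ⊢
    linarith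
  have hinner : ⟪q - r3, r2 - r4⟫ = ⟪r3 - r1, r4 - r2⟫ := by
    simp only [inner_eq_coord, PiLp.sub_apply] at hperp ⊢
    linear_combination -hperp
  have hcross' : cross2 (q - r3) (r3 - r1) = cross2 (q - r1) (r3 - r1) := by
    simp only [cross2, PiLp.sub_apply]
    ring
  have hbc := inner_self_mul_cross2 (r4 - r2) (q - r1) (r3 - r1)
  rw [real_inner_comm (q - r1), hperp, zero_mul, zero_sub] at hbc
  have hkey : ⟪r4 - r2, r4 - r2⟫ * (⟪q - r3, r2 - r4⟫ * cross2 (q - r3) (r3 - r1)) =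
      cross2 (q - r1) (r4 - r2) * ⟪r3 - r1, r4 - r2⟫ ^ 2 := by
    rw [hinner, hcross', mul_left_comm, hbc, real_inner_comm (r3 - r1), cross2_comm (r4 - r2)]
    ring
  exact pos_of_mul_pos_right (hkey ▸ mul_pos hcross (sq_pos_of_ne_zero hdiag))
    real_inner_self_nonneg

theorem stmt14_general
    (r1 r2 r3 r4 q a12 a23 a34 a41 : Pt)
    (hconv : Convex4 r1 r2 r3 r4)
    (hdiag : inner ℝ (r3 - r1) (r4 - r2) ≠ (0:ℝ))
    (hq : IsQPoint r1 r2 r3 r4 q)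
    (ha12 : a12 ∈ lineDir r1 (q - r3) ∩ lineDir r2 (rot90 (q - r3)))
    (ha23 : a23 ∈ lineDir r2 (rot90 (q - r3)) ∩ lineDir r3 (q - r3))
    (ha34 : a34 ∈ lineDir r3 (q - r3) ∩ lineDir r4 (rot90 (q - r3)))
    (ha41 : a41 ∈ lineDir r4 (rot90 (q - r3)) ∩ lineDir r1 (q - r3))
    (p1 p2 p3 : Pt)
    (hp1 : p1 = midpoint ℝ a41 a12) (hp2 : p2 = midpoint ℝ a12 a23)
    (hp3 : p3 = midpoint ℝ a23 a34)
    (hcwp : cross2 (p2 - p1) (p3 - p1) < 0) :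
    cross2 (r2 - r1) (r3 - r1) < 0 := by
  rcases hconv with ⟨-, -, -, hccw⟩ | ⟨hcw, -, -, -⟩
  · have hside : 0 < cross2 (r2 - r1) (r4 - r1) := by
      simp only [cross2, PiLp.sub_apply] at hccw ⊢
      linarith
    have hpos := inner_mul_cross2_pos_of_isQPoint hq hdiag hside
    rw [← two_mul_inner_self_mul_cross2_midpoints ha12 ha23 ha34 ha41, ← hp1, ← hp2, ← hp3]
      at hpos
    have := pos_of_mul_pos_right hpos (mul_nonneg zero_le_two real_inner_self_nonneg)
    linarith
  · simp only [cross2, PiLp.sub_apply] at hcw ⊢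
    linarith

/-- If the targets `p1, p2, p3` are in clockwise order, then so are `r1, r2, r3`. -/
theorem stmt14
    (r1 r2 r3 r4 q a12 a23 a34 a41 : Pt)
    (hconv : Convex4 r1 r2 r3 r4)
    (hdiag : inner ℝ (r3 - r1) (r4 - r2) ≠ (0:ℝ))
    (hq : IsQPoint r1 r2 r3 r4 q) (hq3 : q ≠ r3)
    (ha12 : a12 ∈ lineDir r1 (q - r3) ∩ lineDir r2 (rot90 (q - r3)))
    (ha23 : a23 ∈ lineDir r2 (rot90 (q - r3)) ∩ lineDir r3 (q - r3))
    (ha34 : a34 ∈ lineDir r3 (q - r3) ∩ lineDir r4 (rot90 (q - r3)))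
    (ha41 : a41 ∈ lineDir r4 (rot90 (q - r3)) ∩ lineDir r1 (q - r3))
    (p1 p2 p3 p4 : Pt)
    (hp1 : p1 = midpoint ℝ a41 a12) (hp2 : p2 = midpoint ℝ a12 a23)
    (hp3 : p3 = midpoint ℝ a23 a34) (hp4 : p4 = midpoint ℝ a34 a41)
    (hcwp : cross2 (p2 - p1) (p3 - p1) < 0) :
    cross2 (r2 - r1) (r3 - r1) < 0 :=
  stmt14_general r1 r2 r3 r4 q a12 a23 a34 a41 hconv hdiag hq ha12 ha23 ha34 ha41 p1 p2 p3 hp1 hp2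
    hp3 hcwp

end
end

section
/- Let ℓ1 and ℓ3 be two distinct parallel lines and ℓ2, ℓ4 two distinct lines perpendicular to them, bounding a square Q with medial square Q' (vertices at edge midpoints of Q). Let ri ∈ ℓi for i = 1,2,3,4, let pi be the vertex of Q' on ℓi, and suppose the pathway of r2 (segment r2 p2) intersects the segment r1 r3. Then the pathway of r4 (segment r4 p4) does not intersect the segment r1 r3. (Two opposite robots cannot both be blocked.) -/
open EuclideanGeometry Real
open scoped RealInnerProductSpace

noncomputable section

/-!
Put `d = q - r3`, the direction of `ℓ1` and `ℓ3`, and measure on which side of the diagonal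
`r1 r3` a point `x` lies by `orient r1 r3 x`. A blocked robot and its target lie weakly on
opposite sides of that diagonal, while convexity puts `r2` and `r4` strictly on opposite sides.
The targets `p2`, `p4` lie on the midline of `ℓ1`, `ℓ3`, and since the `q`-construction gives
`r4 - r2 = ε • rot90 (q - r1)`, their sides differ by
`‖d‖² (orient r1 r3 p4 - orient r1 r3 p2) = ε (orient r1 r3 q)²`, with `orient r1 r3 q ≠ 0`
because the diagonals are not orthogonal. The ray condition of the construction forces the sign
of `ε` to be the orientation of `r1 r2 r3 r4`, and then this identity contradicts the side
conditions for both robots at once.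
-/

lemma mul_nonpos_of_mul_pos_of_mul_nonpos {x a b : ℝ} (hxa : 0 < x * a) (hab : a * b ≤ 0) :
    x * b ≤ 0 := by
  refine nonpos_of_mul_nonpos_right ?_ hxa
  nlinarith [mul_nonpos_of_nonneg_of_nonpos (sq_nonneg x) hab]

@[simp] lemma rot90_apply_zero (v : Pt) : rot90 v 0 = -v 1 := rfl

@[simp] lemma rot90_apply_one (v : Pt) : rot90 v 1 = v 0 := rfl

lemma Pt.inner_eq (x y : Pt) : ⟪x, y⟫ = x 0 * y 0 + x 1 * y 1 := by
  simp [PiLp.inner_apply, Fin.sum_univ_two, mul_comm]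

lemma Pt.norm_sq_eq (x : Pt) : ‖x‖ ^ 2 = x 0 ^ 2 + x 1 ^ 2 := by
  simp [EuclideanSpace.norm_sq_eq, Fin.sum_univ_two]

lemma Pt.midpoint_apply (x y : Pt) (i : Fin 2) : midpoint ℝ x y i = (x i + y i) / 2 := by
  simp only [midpoint_eq_smul_add, invOf_eq_inv, smul_add, PiLp.add_apply, PiLp.smul_apply,
    smul_eq_mul]
  ring

def orient (a b c : Pt) : ℝ := cross2 (b - a) (c - a)

lemma cross2_sub_sub_eq_orient (a b c : Pt) : cross2 (b - a) (c - b) = orient a b c := by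
  simp only [orient, cross2, PiLp.sub_apply]; ring

lemma orient_swap (a b c : Pt) : orient a c b = -orient a b c := by
  simp only [orient, cross2, PiLp.sub_apply]; ring

lemma orient_rotate (a b c : Pt) : orient b c a = orient a b c := by
  simp only [orient, cross2, PiLp.sub_apply]; ring

lemma orient_smul_add_smul (a b x y : Pt) {s t : ℝ} (hst : s + t = 1) :
    orient a b (s • x + t • y) = s * orient a b x + t * orient a b y := by
  have hs : s = 1 - t := by linarith
  subst hs
  simp only [orient, cross2, PiLp.sub_apply, PiLp.add_apply, PiLp.smul_apply, smul_eq_mul]; ring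

lemma orient_eq_zero_of_mem_segment {a b z : Pt} (hz : z ∈ segment ℝ a b) : orient a b z = 0 := by
  obtain ⟨s, t, -, -, hst, rfl⟩ := hz
  rw [orient_smul_add_smul a b a b hst]
  simp only [orient, cross2, PiLp.sub_apply]; ring

lemma orient_mul_orient_nonpos_of_inter {a b x y : Pt}
    (h : (segment ℝ x y ∩ segment ℝ a b).Nonempty) : orient a b x * orient a b y ≤ 0 := by
  obtain ⟨z, ⟨s, t, hs, ht, hst, rfl⟩, hz⟩ := h
  have hzero := orient_eq_zero_of_mem_segment hz
  rw [orient_smul_add_smul a b x y hst] at hzero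
  have key : orient a b x * orient a b y = -(s * orient a b x ^ 2 + t * orient a b y ^ 2) := by
    linear_combination (orient a b x + orient a b y) * hzero - orient a b x * orient a b y * hst
  rw [key, neg_nonpos]
  positivity

lemma Convex4.mul_orient_pos {a b c d : Pt} {ε : ℝ} (h : Convex4 a b c d) (hε : ε ≠ 0)
    (hd : 0 ≤ ε * orient d a b) : 0 < ε * orient a b c ∧ 0 < ε * orient c d a := by
  simp only [Convex4, cross2_sub_sub_eq_orient] at h
  rcases h with ⟨hb, -, hd', ha⟩ | ⟨hb, -, hd', ha⟩ <;> rcases hε.lt_or_gt with hε | hε <;>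
    constructor <;> nlinarith

lemma inner_rot90_left (u v : Pt) : ⟪rot90 u, v⟫ = cross2 u v := by
  simp only [Pt.inner_eq, cross2, rot90_apply_zero, rot90_apply_one]; ring

lemma cross2_rot90_right (u v : Pt) : cross2 v (rot90 u) = ⟪v, u⟫ := by
  simp only [Pt.inner_eq, cross2, rot90_apply_zero, rot90_apply_one]; ring

lemma inner_rot90_sub_sub (a b c : Pt) : ⟪rot90 (c - a), c - b⟫ = orient a b c := by
  rw [inner_rot90_left]; simp only [orient, cross2, PiLp.sub_apply]; ring

lemma inner_sub_rot90_sub (a b c : Pt) : ⟪b - a, rot90 (c - a)⟫ = -orient a b c := by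
  rw [real_inner_comm, inner_rot90_left]; simp only [orient, cross2, PiLp.sub_apply]; ring

lemma mem_lineDir_rot90_iff {p a d : Pt} : p ∈ lineDir a (rot90 d) ↔ ⟪p - a, d⟫ = 0 := by
  rw [lineDir, Set.mem_ofPred_eq, cross2_rot90_right]

lemma mem_lineDir_smul_iff {p a d : Pt} {c : ℝ} (hc : c ≠ 0) :
    p ∈ lineDir a (c • d) ↔ p ∈ lineDir a d := by
  have : cross2 (p - a) (c • d) = c * cross2 (p - a) d := by
    simp only [cross2, PiLp.smul_apply, smul_eq_mul]; ring
  simp only [lineDir, Set.mem_ofPred_eq, this, mul_eq_zero, hc, false_or]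

lemma midpoint_mem_lineDir {a b c e d : Pt} (ha : a ∈ lineDir c d) (hb : b ∈ lineDir e d) :
    midpoint ℝ a b ∈ lineDir (midpoint ℝ c e) d := by
  simp only [lineDir, Set.mem_ofPred_eq, cross2, PiLp.sub_apply, Pt.midpoint_apply] at *
  linear_combination (ha + hb) / 2

lemma sq_norm_smul_eq_inner_smul_add_cross2_smul_rot90 (u w : Pt) :
    ‖u‖ ^ 2 • w = ⟪u, w⟫ • u + cross2 u w • rot90 u := by
  ext i
  fin_cases i <;>
  · simp only [Pt.norm_sq_eq, Pt.inner_eq, cross2, PiLp.add_apply, PiLp.smul_apply, smul_eq_mul,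
      rot90_apply_zero, rot90_apply_one, Fin.zero_eta, Fin.mk_one, Fin.isValue]
    ring

lemma exists_eq_smul_rot90_of_inner_eq_zero {u w : Pt} (hu : u ≠ 0) (h : ⟪u, w⟫ = 0) :
    ∃ ε : ℝ, w = ε • rot90 u := by
  have hnorm : ‖u‖ ^ 2 ≠ 0 := by positivity
  refine ⟨(‖u‖ ^ 2)⁻¹ * cross2 u w, ?_⟩
  rw [mul_smul, ← zero_add (cross2 u w • rot90 u), ← zero_smul ℝ u, ← h,
    ← sq_norm_smul_eq_inner_smul_add_cross2_smul_rot90, inv_smul_smul₀ hnorm]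

lemma sq_norm_mul_orient_of_mem_midline {a b c d p : Pt} (hmid : p ∈ lineDir (midpoint ℝ a c) d)
    (hb : p ∈ lineDir b (rot90 d)) :
    ‖d‖ ^ 2 * orient a c p = ⟪b - midpoint ℝ a c, d⟫ * cross2 (c - a) d := by
  rw [mem_lineDir_rot90_iff] at hb
  simp only [lineDir, Set.mem_ofPred_eq, orient, cross2, Pt.inner_eq, Pt.norm_sq_eq,
    PiLp.sub_apply, Pt.midpoint_apply] at *
  linear_combination (-((c 0 - a 0) * d 0 + (c 1 - a 1) * d 1)) * hmid
    + ((c 0 - a 0) * d 1 - (c 1 - a 1) * d 0) * hb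

lemma inner_sub_nonneg_of_add_smul_mem_lineDir_rot90 {a b u : Pt} {t : ℝ} (ht : 0 ≤ t)
    (h : a + t • u ∈ lineDir b (rot90 u)) : 0 ≤ ⟪b - a, u⟫ := by
  rw [mem_lineDir_rot90_iff, show a + t • u - b = t • u - (b - a) by abel, inner_sub_left,
    real_inner_smul_left, real_inner_self_eq_norm_sq, sub_eq_zero] at h
  rw [← h]
  positivity

lemma IsQPoint.exists_eq_smul_rot90 {r1 r2 r3 r4 q : Pt} (hq : IsQPoint r1 r2 r3 r4 q)
    (h : r4 - r2 ≠ 0) :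
    ∃ ε ≠ 0, r4 - r2 = ε • rot90 (q - r1) ∧ 0 ≤ ε * orient r4 r1 r2 := by
  obtain ⟨hdist, hperp, t, ht, hray⟩ := hq
  rw [dist_eq_norm', dist_eq_norm'] at hdist
  have hu : q - r1 ≠ 0 := by
    rw [← norm_ne_zero_iff, hdist, norm_ne_zero_iff]; exact h
  obtain ⟨ε, hε⟩ := exists_eq_smul_rot90_of_inner_eq_zero hu hperp
  have hε0 : ε ≠ 0 := by rintro rfl; rw [zero_smul] at hε; exact h hε
  refine ⟨ε, hε0, hε, ?_⟩
  rw [hε, mem_lineDir_smul_iff hε0] at hray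
  have hahead := inner_sub_nonneg_of_add_smul_mem_lineDir_rot90 ht hray
  have horient : orient r4 r1 r2 = ε * ⟪r2 - r1, q - r1⟫ := by
    rw [show r4 = r2 + ε • rot90 (q - r1) by rw [← hε]; abel]
    simp only [orient, cross2, Pt.inner_eq, PiLp.sub_apply, PiLp.add_apply, PiLp.smul_apply,
      smul_eq_mul, rot90_apply_zero, rot90_apply_one]
    ring
  rw [horient, ← mul_assoc]
  exact mul_nonneg (mul_self_nonneg ε) hahead

theorem stmt15_general
    (r1 r2 r3 r4 q a12 a23 a34 a41 : Pt)
    (hconv : Convex4 r1 r2 r3 r4)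
    (hdiag : inner ℝ (r3 - r1) (r4 - r2) ≠ (0:ℝ))
    (hq : IsQPoint r1 r2 r3 r4 q)
    (ha12 : a12 ∈ lineDir r1 (q - r3) ∩ lineDir r2 (rot90 (q - r3)))
    (ha23 : a23 ∈ lineDir r2 (rot90 (q - r3)) ∩ lineDir r3 (q - r3))
    (ha34 : a34 ∈ lineDir r3 (q - r3) ∩ lineDir r4 (rot90 (q - r3)))
    (ha41 : a41 ∈ lineDir r4 (rot90 (q - r3)) ∩ lineDir r1 (q - r3))
    (p2 p4 : Pt)
    (hp2 : p2 = midpoint ℝ a12 a23)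
    (hp4 : p4 = midpoint ℝ a34 a41)
    (hblocked2 : ((segment ℝ r2 p2) ∩ (segment ℝ r1 r3)).Nonempty) :
    ¬ ((segment ℝ r4 p4) ∩ (segment ℝ r1 r3)).Nonempty := by
  intro hblocked4
  have hw : r4 - r2 ≠ 0 := by rintro h; rw [h, inner_zero_right] at hdiag; exact hdiag rfl
  obtain ⟨ε, hε0, hε, hturn⟩ := hq.exists_eq_smul_rot90 hw
  have hW : orient r1 r3 q ≠ 0 := by
    rw [hε, real_inner_smul_right, inner_sub_rot90_sub] at hdiag
    exact neg_ne_zero.1 (right_ne_zero_of_mul hdiag)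
  have hd : ⟪r4 - r2, q - r3⟫ = ε * orient r1 r3 q := by
    rw [hε, real_inner_smul_left, inner_rot90_sub_sub]
  obtain ⟨h123, h341⟩ := hconv.mul_orient_pos hε0 hturn
  have hP2 := sq_norm_mul_orient_of_mem_midline (midpoint_mem_lineDir ha12.1 ha23.2)
    (by simpa using midpoint_mem_lineDir ha12.2 ha23.1)
  have hP4 := sq_norm_mul_orient_of_mem_midline
    (midpoint_comm (R := ℝ) r3 r1 ▸ midpoint_mem_lineDir ha34.1 ha41.2)
    (by simpa using midpoint_mem_lineDir ha34.2 ha41.1)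
  rw [← hp2, cross2_sub_sub_eq_orient] at hP2
  rw [← hp4, cross2_sub_sub_eq_orient] at hP4
  have hdiff : ‖q - r3‖ ^ 2 * (orient r1 r3 p4 - orient r1 r3 p2) = ε * orient r1 r3 q ^ 2 := by
    rw [mul_sub, hP2, hP4, ← sub_mul, ← inner_sub_left, sub_sub_sub_cancel_right, hd]; ring
  have h2 := orient_mul_orient_nonpos_of_inter hblocked2
  have h4 := orient_mul_orient_nonpos_of_inter hblocked4
  rw [orient_swap, neg_mul, ← mul_neg] at h2
  rw [← orient_rotate] at h4
  have hside2 := mul_nonpos_of_mul_pos_of_mul_nonpos h123 h2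
  have hside4 := mul_nonpos_of_mul_pos_of_mul_nonpos h341 h4
  have hneg : ‖q - r3‖ ^ 2 * (ε * orient r1 r3 p4 - ε * orient r1 r3 p2) ≤ 0 :=
    mul_nonpos_of_nonneg_of_nonpos (by positivity) (by linarith)
  have hpos : 0 < ε ^ 2 * orient r1 r3 q ^ 2 := by positivity
  linarith [congrArg (ε * ·) hdiff]

/-- Two opposite robots cannot both be blocked: if the pathway of `r2` meets the segment
`r1 r3`, the pathway of `r4` does not. -/
theorem stmt15
    (r1 r2 r3 r4 q a12 a23 a34 a41 : Pt)
    (hconv : Convex4 r1 r2 r3 r4)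
    (hdiag : inner ℝ (r3 - r1) (r4 - r2) ≠ (0:ℝ))
    (hq : IsQPoint r1 r2 r3 r4 q) (hq3 : q ≠ r3)
    (ha12 : a12 ∈ lineDir r1 (q - r3) ∩ lineDir r2 (rot90 (q - r3)))
    (ha23 : a23 ∈ lineDir r2 (rot90 (q - r3)) ∩ lineDir r3 (q - r3))
    (ha34 : a34 ∈ lineDir r3 (q - r3) ∩ lineDir r4 (rot90 (q - r3)))
    (ha41 : a41 ∈ lineDir r4 (rot90 (q - r3)) ∩ lineDir r1 (q - r3))
    (p1 p2 p3 p4 : Pt)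
    (hp1 : p1 = midpoint ℝ a41 a12) (hp2 : p2 = midpoint ℝ a12 a23)
    (hp3 : p3 = midpoint ℝ a23 a34) (hp4 : p4 = midpoint ℝ a34 a41)
    (hblocked2 : ((segment ℝ r2 p2) ∩ (segment ℝ r1 r3)).Nonempty) :
    ¬ ((segment ℝ r4 p4) ∩ (segment ℝ r1 r3)).Nonempty :=
  stmt15_general r1 r2 r3 r4 q a12 a23 a34 a41 hconv hdiag hq ha12 ha23 ha34 ha41 p2 p4 hp2 hp4
    hblocked2

end
end

section
/- Let r3 and r4 be convergent robots with perpendicular guidelines meeting at g, with targets p3 ∈ [r3, g] and p4 ∈ [r4, g]. As r3 moves toward p3 and r4 moves toward p4 (each monotonically along its guideline), the length |r3 r4| is non-increasing, and the line through r3 and r4 rotates monotonically (the signed angle of the direction vector r4 − r3 changes monotonically). -/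
/-!
Write `u = g - r3`, `v = g - r4` and `p3 = r3 + a • u`, `p4 = r4 + b • v` with `a, b ∈ [0, 1]`.
Then `R4 t - R3 t = (1 - t a) • u - (1 - t b) • v` with both coefficients in `[0, 1]` and
decreasing in `t`; since `u ⊥ v`, Pythagoras makes the length decrease. The cross product of
two such chords is bilinear in the coefficients and equals `(t - s) (b - a) (u × v)`, whose sign
is fixed once `s ≤ t`.
-/

open EuclideanGeometry Real
open scoped RealInnerProductSpace

noncomputable section

lemma exists_add_smul_sub_eq_sub_smul_of_mem_segment {E : Type*} [AddCommGroup E] [Module ℝ E]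
    {r p g : E} (hp : p ∈ segment ℝ r g) :
    ∃ a ∈ Set.Icc (0 : ℝ) 1, ∀ t : ℝ, r + t • (p - r) = g - (1 - t * a) • (g - r) := by
  rw [segment_eq_image'] at hp
  obtain ⟨a, ha, rfl⟩ := hp
  exact ⟨a, ha, fun t => by module⟩

lemma antitoneOn_one_sub_mul_sq {a : ℝ} (ha : a ∈ Set.Icc (0 : ℝ) 1) :
    AntitoneOn (fun t : ℝ => (1 - t * a) ^ 2) (Set.Icc 0 1) := by
  intro s _ t ht hst
  have hta : t * a ≤ 1 := mul_le_one₀ ht.2 ha.1 ha.2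
  have hsta : s * a ≤ t * a := mul_le_mul_of_nonneg_right hst ha.1
  exact pow_le_pow_left₀ (by linarith) (by linarith) 2

lemma norm_smul_sub_smul_sq_of_inner_eq_zero {E : Type*} [NormedAddCommGroup E]
    [InnerProductSpace ℝ E] {u v : E} (huv : ⟪u, v⟫ = 0) (x y : ℝ) :
    ‖x • u - y • v‖ ^ 2 = x ^ 2 * ‖u‖ ^ 2 + y ^ 2 * ‖v‖ ^ 2 := by
  have h : ⟪x • u, y • v⟫ = 0 := by simp [real_inner_smul_left, real_inner_smul_right, huv]
  simp only [sq, norm_sub_sq_eq_norm_sq_add_norm_sq_real h, norm_smul, Real.norm_eq_abs]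
  rw [← abs_mul_abs_self x, ← abs_mul_abs_self y]
  ring

lemma antitoneOn_norm_one_sub_smul_sub {E : Type*} [NormedAddCommGroup E]
    [InnerProductSpace ℝ E] {u v : E} (huv : ⟪u, v⟫ = 0) {a b : ℝ}
    (ha : a ∈ Set.Icc (0 : ℝ) 1) (hb : b ∈ Set.Icc (0 : ℝ) 1) :
    AntitoneOn (fun t : ℝ => ‖(1 - t * a) • u - (1 - t * b) • v‖) (Set.Icc 0 1) := by
  intro s hs t ht hst
  rw [← pow_le_pow_iff_left₀ (norm_nonneg _) (norm_nonneg _) two_ne_zero,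
    norm_smul_sub_smul_sq_of_inner_eq_zero huv, norm_smul_sub_smul_sq_of_inner_eq_zero huv]
  exact add_le_add
    (mul_le_mul_of_nonneg_right (antitoneOn_one_sub_mul_sq ha hs ht hst) (sq_nonneg _))
    (mul_le_mul_of_nonneg_right (antitoneOn_one_sub_mul_sq hb hs ht hst) (sq_nonneg _))

lemma cross2_smul_sub_smul (u v : Pt) (x y x' y' : ℝ) :
    cross2 (x • u - y • v) (x' • u - y' • v) = (y * x' - x * y') * cross2 u v := by
  simp only [cross2, PiLp.sub_apply, PiLp.smul_apply, smul_eq_mul]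
  ring

theorem stmt18_general (r3 r4 p3 p4 g : Pt)
    (hperp : inner ℝ (g - r3) (g - r4) = (0:ℝ))
    (hp3 : p3 ∈ segment ℝ r3 g) (hp4 : p4 ∈ segment ℝ r4 g)
    (R3 R4 : ℝ → Pt)
    (hR3 : ∀ t, R3 t = r3 + t • (p3 - r3)) (hR4 : ∀ t, R4 t = r4 + t • (p4 - r4)) :
    AntitoneOn (fun t => dist (R3 t) (R4 t)) (Set.Icc 0 1) ∧
    ((∀ s ∈ Set.Icc (0:ℝ) 1, ∀ t ∈ Set.Icc (0:ℝ) 1, s ≤ t →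
        0 ≤ cross2 (R4 s - R3 s) (R4 t - R3 t)) ∨
     (∀ s ∈ Set.Icc (0:ℝ) 1, ∀ t ∈ Set.Icc (0:ℝ) 1, s ≤ t →
        cross2 (R4 s - R3 s) (R4 t - R3 t) ≤ 0)) := by
  obtain ⟨a, ha, hpath3⟩ := exists_add_smul_sub_eq_sub_smul_of_mem_segment hp3
  obtain ⟨b, hb, hpath4⟩ := exists_add_smul_sub_eq_sub_smul_of_mem_segment hp4
  have hchord : ∀ t, R4 t - R3 t = (1 - t * a) • (g - r3) - (1 - t * b) • (g - r4) := by
    intro t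
    rw [hR3, hR4, hpath3, hpath4]
    abel
  have hcross : ∀ s t, cross2 (R4 s - R3 s) (R4 t - R3 t) =
      (t - s) * ((b - a) * cross2 (g - r3) (g - r4)) := by
    intro s t
    rw [hchord, hchord, cross2_smul_sub_smul]
    ring
  refine ⟨?_, ?_⟩
  · intro s hs t ht hst
    simpa only [dist_comm (R3 _), dist_eq_norm, hchord] using
      antitoneOn_norm_one_sub_smul_sub hperp ha hb hs ht hst
  · rcases le_total 0 ((b - a) * cross2 (g - r3) (g - r4)) with hc | hc
    · refine .inl fun s _ t _ hst => ?_
      rw [hcross]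
      exact mul_nonneg (sub_nonneg.2 hst) hc
    · refine .inr fun s _ t _ hst => ?_
      rw [hcross]
      exact mul_nonpos_of_nonneg_of_nonpos (sub_nonneg.2 hst) hc

/-- As two convergent robots with perpendicular guidelines move toward their targets at
proportional rates, their mutual distance is non-increasing and the line through them
rotates monotonically. -/
theorem stmt18 (r3 r4 p3 p4 g : Pt)
    (hperp : inner ℝ (g - r3) (g - r4) = (0:ℝ))
    (hp3 : p3 ∈ segment ℝ r3 g) (hp4 : p4 ∈ segment ℝ r4 g)
    (R3 R4 : ℝ → Pt)
    (hR3 : ∀ t, R3 t = r3 + t • (p3 - r3)) (hR4 : ∀ t, R4 t = r4 + t • (p4 - r4))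
    (hd3 : AntitoneOn (fun t => dist (R3 t) g) (Set.Icc 0 1))
    (hd4 : AntitoneOn (fun t => dist (R4 t) g) (Set.Icc 0 1)) :
    AntitoneOn (fun t => dist (R3 t) (R4 t)) (Set.Icc 0 1) ∧
    ((∀ s ∈ Set.Icc (0:ℝ) 1, ∀ t ∈ Set.Icc (0:ℝ) 1, s ≤ t →
        0 ≤ cross2 (R4 s - R3 s) (R4 t - R3 t)) ∨
     (∀ s ∈ Set.Icc (0:ℝ) 1, ∀ t ∈ Set.Icc (0:ℝ) 1, s ≤ t →
        cross2 (R4 s - R3 s) (R4 t - R3 t) ≤ 0)) :=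
  stmt18_general r3 r4 p3 p4 g hperp hp3 hp4 R3 R4 hR3 hR4

end
end
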